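/- arXiv:1209.6045 — 5 statements merged into one kernel-verified Lean document; each statement's English description precedes it below -/
import Mathlib

section
/- Identifying T₂(E) with G₂/Δ as below, the map sending the class (a,b,c,d)Δ to (a/b, a/c) is a well-defined group isomorphism from T₂(E) onto Eˣ × Eˣ, and it is Galois-equivariant when τ acts on Eˣ × Eˣ by τ·(x,y) := (τ(y)⁻¹, τ(x)). -/
/-- The automorphism of `Eˣ` induced by a field automorphism `τ` of `E`. -/
def su {F E : Type*} [Field F] [Field E] [Algebra F E] (τ : E ≃ₐ[F] E) : Eˣ ≃* Eˣ :=
  Units.mapEquiv τ.toRingEquiv.toMulEquiv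

/-- The subgroup `G₂ = {(a,b,c,d) ∈ (Eˣ)⁴ : a·d = b·c}`. -/
def G2 (E : Type*) [Field E] : Subgroup (Eˣ × Eˣ × Eˣ × Eˣ) where
  carrier := {p | p.1 * p.2.2.2 = p.2.1 * p.2.2.1}
  one_mem' := rfl
  mul_mem' := by
    intro p q hp hq
    have hp' : p.1 * p.2.2.2 = p.2.1 * p.2.2.1 := hp
    have hq' : q.1 * q.2.2.2 = q.2.1 * q.2.2.1 := hq
    show p.1 * q.1 * (p.2.2.2 * q.2.2.2) = p.2.1 * q.2.1 * (p.2.2.1 * q.2.2.1)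
    rw [mul_mul_mul_comm p.1 q.1, hp', hq', mul_mul_mul_comm]
  inv_mem' := by
    intro p hp
    have hp' : p.1 * p.2.2.2 = p.2.1 * p.2.2.1 := hp
    show p.1⁻¹ * p.2.2.2⁻¹ = p.2.1⁻¹ * p.2.2.1⁻¹
    rw [← mul_inv, ← mul_inv, hp']

/-- The diagonal embedding `Eˣ → (Eˣ)⁴`. -/
def diagHom (E : Type*) [Field E] : Eˣ →* Eˣ × Eˣ × Eˣ × Eˣ where
  toFun x := (x, x, x, x)
  map_one' := rfl
  map_mul' _ _ := rfl

/-- The diagonal subgroup `Δ ≤ (Eˣ)⁴`. -/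
def Delta (E : Type*) [Field E] : Subgroup (Eˣ × Eˣ × Eˣ × Eˣ) := (diagHom E).range

/-- The permutation `(a,b,c,d) ↦ (c,a,d,b)` of `(Eˣ)⁴`. -/
def perm2 (E : Type*) [Field E] : (Eˣ × Eˣ × Eˣ × Eˣ) ≃* (Eˣ × Eˣ × Eˣ × Eˣ) where
  toFun p := (p.2.2.1, p.1, p.2.2.2, p.2.1)
  invFun p := (p.2.1, p.2.2.2, p.1, p.2.2.1)
  left_inv _ := rfl
  right_inv _ := rfl
  map_mul' _ _ := rfl

/-- Componentwise application of an automorphism of `Eˣ` to `(Eˣ)⁴`. -/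
def map4 {E : Type*} [Field E] (e : Eˣ ≃* Eˣ) :
    (Eˣ × Eˣ × Eˣ × Eˣ) ≃* (Eˣ × Eˣ × Eˣ × Eˣ) :=
  e.prodCongr (e.prodCongr (e.prodCongr e))

/-- The Galois action `(a,b,c,d) ↦ (τ(c), τ(a), τ(d), τ(b))` on `(Eˣ)⁴`. -/
def tAut {F E : Type*} [Field F] [Field E] [Algebra F E] (τ : E ≃ₐ[F] E) :
    (Eˣ × Eˣ × Eˣ × Eˣ) ≃* (Eˣ × Eˣ × Eˣ × Eˣ) :=
  (perm2 E).trans (map4 (su τ))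

/-- The Galois action `τ·(x, y) = (τ(y)⁻¹, τ(x))` on `Eˣ × Eˣ`. -/
def tPair {F E : Type*} [Field F] [Field E] [Algebra F E] (τ : E ≃ₐ[F] E) :
    (Eˣ × Eˣ) ≃* (Eˣ × Eˣ) :=
  (MulEquiv.prodComm : (Eˣ × Eˣ) ≃* (Eˣ × Eˣ)).trans
    (MulEquiv.prodCongr ((su τ).trans (MulEquiv.inv Eˣ)) (su τ))


/-- The homomorphism `G₂ → Eˣ × Eˣ`, `(a,b,c,d) ↦ (a/b, a/c)`. -/
def psi2 (E : Type*) [Field E] : G2 E →* Eˣ × Eˣ where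
  toFun g := ((g : Eˣ × Eˣ × Eˣ × Eˣ).1 / (g : Eˣ × Eˣ × Eˣ × Eˣ).2.1,
    (g : Eˣ × Eˣ × Eˣ × Eˣ).1 / (g : Eˣ × Eˣ × Eˣ × Eˣ).2.2.1)
  map_one' := by simp
  map_mul' g h := by
    ext <;> simp <;> ring

lemma psi2_ker (E : Type*) [Field E] : ((Delta E).subgroupOf (G2 E)) = (psi2 E).ker := by
  ext g
  obtain ⟨⟨a, b, c, d⟩, hg⟩ := g
  have hG : a * d = b * c := hg
  constructor
  · rintro ⟨x, hx⟩
    have hx' : (x, x, x, x) = (a, b, c, d) := hx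
    have h1 : x = a := congrArg Prod.fst hx'
    have h2 : x = b := congrArg (fun p => p.2.1) hx'
    have h3 : x = c := congrArg (fun p => p.2.2.1) hx'
    subst h1
    simp [MonoidHom.mem_ker, psi2, Prod.ext_iff, ← h2, ← h3]
  · intro h
    have h' : a / b = 1 ∧ a / c = 1 := by
      simpa [MonoidHom.mem_ker, psi2, Prod.ext_iff] using h
    have hb : a = b := div_eq_one.mp h'.1
    have hc : a = c := div_eq_one.mp h'.2
    have hd : a = d := by
      have : a * d = a * a := by rw [hG, ← hb, ← hc]
      exact (mul_left_cancel this).symm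
    exact ⟨a, by simp only [diagHom, MonoidHom.coe_mk, OneHom.coe_mk]; show (a,a,a,a) = (a,b,c,d); rw [← hb, ← hc, ← hd]⟩

lemma psi2_surj (E : Type*) [Field E] : Function.Surjective (psi2 E) := by
  rintro ⟨x, y⟩
  refine ⟨⟨(x * y, y, x, 1), ?_⟩, ?_⟩
  · show x * y * 1 = y * x
    rw [mul_one, mul_comm]
  · show (x * y / y, x * y / x) = (x, y)
    ext <;> simp <;> ring

/-- identifying `T₂(E) = G₂/Δ`, the map `(a,b,c,d)Δ ↦ (a/b, a/c)` is a
well-defined group isomorphism onto `Eˣ × Eˣ`, Galois-equivariant when `τ` acts on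
`Eˣ × Eˣ` by `τ·(x,y) = (τ(y)⁻¹, τ(x))`. -/
theorem statement_3 {F E : Type*} [Field F] [Field E] [Algebra F E] [IsGalois F E]
    (hdeg : Module.finrank F E = 4) (τ : E ≃ₐ[F] E) (hτ : orderOf τ = 4) :
    ∃ φ : (G2 E ⧸ ((Delta E).subgroupOf (G2 E))) ≃* Eˣ × Eˣ,
      (∀ g : G2 E,
        φ (QuotientGroup.mk g) =
          ((g : Eˣ × Eˣ × Eˣ × Eˣ).1 / (g : Eˣ × Eˣ × Eˣ × Eˣ).2.1,
            (g : Eˣ × Eˣ × Eˣ × Eˣ).1 / (g : Eˣ × Eˣ × Eˣ × Eˣ).2.2.1)) ∧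
      (∀ g : G2 E, ∀ hg : tAut τ (g : Eˣ × Eˣ × Eˣ × Eˣ) ∈ G2 E,
        φ (QuotientGroup.mk (⟨tAut τ (g : Eˣ × Eˣ × Eˣ × Eˣ), hg⟩ : G2 E)) =
          tPair τ (φ (QuotientGroup.mk g))) := by
  refine ⟨(QuotientGroup.quotientMulEquivOfEq (psi2_ker E)).trans
    (QuotientGroup.quotientKerEquivOfSurjective (psi2 E) (psi2_surj E)), ?_, ?_⟩
  · intro g; rfl
  · intro g hg
    obtain ⟨⟨a, b, c, d⟩, hG⟩ := g
    have hG' : a * d = b * c := hG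
    show (su τ c / su τ a, su τ c / su τ d) = tPair τ (a / b, a / c)
    have h1 : su τ c / su τ a = ((su τ) (a / c))⁻¹ := by
      rw [map_div]; rw [inv_div]
    have h2 : su τ c / su τ d = su τ (a / b) := by
      rw [← map_div]
      congr 1
      rw [div_eq_div_iff_mul_eq_mul, mul_comm c b, ← hG', mul_comm]
    rw [h1, h2]
    rfl
end

section
/- The fixed subgroup A^τ of A = Eˣ × Eˣ under the action τ·(x,y) = (τ(y)⁻¹, τ(x)) equals {(x, τ(x)) : x ∈ Eˣ, x·τ²(x) = 1} (i.e., x ∈ ker N_{E/E₁}), and the image of the norm map N : A → A, N(a) := a·(τ·a)·(τ²·a)·(τ³·a), is exactly A^τ. (In other words, Ĥ⁰ of Gal(E/F) acting on A is trivial.) -/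
section aux
variable {F E : Type*} [Field F] [Field E] [Algebra F E] (τ : E ≃ₐ[F] E)

lemma su_val (u : Eˣ) : ((su τ u : Eˣ) : E) = τ (u : E) := rfl
lemma tPair_apply (x y : Eˣ) : tPair τ (x, y) = ((su τ y)⁻¹, su τ x) := rfl

lemma tau4 (hτ : orderOf τ = 4) (a : E) : τ (τ (τ (τ a))) = a := by
  have h : τ ^ 4 = 1 := hτ ▸ pow_orderOf_eq_one τ
  have := DFunLike.congr_fun h a
  simpa [pow_succ, AlgEquiv.mul_apply] using this

lemma tau2_ne (hτ : orderOf τ = 4) : ∃ c : E, τ (τ c) ≠ c := by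
  by_contra h
  push_neg at h
  have h2 : τ ^ 2 = 1 := by
    ext c
    simpa [pow_succ, AlgEquiv.mul_apply] using h c
  have := orderOf_dvd_of_pow_eq_one h2
  rw [hτ] at this
  omega

end aux

/-- for `E/F` cyclic quartic Galois with generator `τ` and the action
`τ·(x,y) = (τ(y)⁻¹, τ(x))` on `A = Eˣ × Eˣ`, the fixed subgroup `A^τ` equals
`{(x, τ(x)) : x·τ²(x) = 1}`, and the image of the norm map
`N(a) = a·(τ·a)·(τ²·a)·(τ³·a)` is exactly `A^τ`; i.e. `Ĥ⁰` is trivial. -/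

theorem statement_4 {F E : Type*} [Field F] [Field E] [Algebra F E] [IsGalois F E]
    (hdeg : Module.finrank F E = 4) (τ : E ≃ₐ[F] E) (hτ : orderOf τ = 4) :
    {p : Eˣ × Eˣ | tPair τ p = p} =
      {p : Eˣ × Eˣ | ∃ x : Eˣ, p = (x, su τ x) ∧ x * su τ (su τ x) = 1} ∧
    Set.range (fun p : Eˣ × Eˣ =>
        p * tPair τ p * tPair τ (tPair τ p) * tPair τ (tPair τ (tPair τ p))) =
      {p : Eˣ × Eˣ | tPair τ p = p} := by
  have h4 := tau4 τ hτ
  have hfix : {p : Eˣ × Eˣ | tPair τ p = p} =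
      {p : Eˣ × Eˣ | ∃ x : Eˣ, p = (x, su τ x) ∧ x * su τ (su τ x) = 1} := by
    ext ⟨x, y⟩
    simp only [Set.mem_setOf_eq, tPair_apply, Prod.mk.injEq]
    constructor
    · rintro ⟨h1, h2⟩
      refine ⟨x, ⟨rfl, h2.symm⟩, ?_⟩
      rw [h2, ← h1]
      group
    · rintro ⟨x', ⟨hx1, hy⟩, hnorm⟩
      subst hx1; subst hy
      constructor
      · rw [inv_eq_iff_eq_inv, ← mul_eq_one_iff_eq_inv, mul_comm]
        exact hnorm
      · rfl
  refine ⟨hfix, ?_⟩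
  apply Set.eq_of_subset_of_subset
  · rintro q ⟨⟨x, y⟩, rfl⟩
    simp only [Set.mem_setOf_eq, tPair_apply, map_mul, map_inv, Prod.mk_mul_mk, Prod.mk.injEq]
    constructor
    · ext
      push_cast [su_val, map_mul, map_inv₀, h4]
      have h1 : τ ((x:E)) ≠ 0 := by simp
      have h2 : τ (τ (x:E)) ≠ 0 := by simp
      have h3 : τ (τ (τ (x:E))) ≠ 0 := by simp
      have h1' : τ ((y:E)) ≠ 0 := by simp
      have h2' : τ (τ (y:E)) ≠ 0 := by simp
      have h3' : τ (τ (τ (y:E))) ≠ 0 := by simp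
      field_simp
    · ext
      push_cast [su_val, map_mul, map_inv₀, h4]
      have h1 : τ ((x:E)) ≠ 0 := by simp
      have h2 : τ (τ (x:E)) ≠ 0 := by simp
      have h3 : τ (τ (τ (x:E))) ≠ 0 := by simp
      have h1' : τ ((y:E)) ≠ 0 := by simp
      have h2' : τ (τ (y:E)) ≠ 0 := by simp
      have h3' : τ (τ (τ (y:E))) ≠ 0 := by simp
      field_simp
  · rw [hfix]
    rintro q ⟨x, rfl, hnorm⟩
    have hx' : (x : E) * τ (τ (x : E)) = 1 := by
      have := congrArg (Units.val) hnorm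
      simpa [su_val] using this
    -- find c with c + x * τ² c ≠ 0
    have hc : ∃ c : E, c + (x:E) * τ (τ c) ≠ 0 := by
      by_contra h
      push_neg at h
      have h1 := h 1
      rw [map_one, map_one, mul_one] at h1
      have hx1 : (x : E) = -1 := by linear_combination h1
      obtain ⟨c, hcne⟩ := tau2_ne τ hτ
      have := h c
      rw [hx1] at this
      apply hcne
      linear_combination -this
    obtain ⟨c, hc⟩ := hc
    set a0 : E := c + (x:E) * τ (τ c) with ha0
    have hkey : (x : E) * τ (τ a0) = a0 := by
      rw [ha0]
      simp only [map_add, map_mul, h4]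
      linear_combination c * hx'
    have hne2 : τ (τ a0) ≠ 0 := by simp [hc]
    have hne3 : τ (τ (τ a0)) ≠ 0 := by simp [hc]
    refine ⟨(Units.mk0 a0 hc, 1), ?_⟩
    simp only [tPair_apply, map_one, map_mul, map_inv, inv_one, one_mul, mul_one,
      Prod.mk_mul_mk, Prod.mk.injEq]
    constructor
    · ext
      push_cast [su_val, map_inv₀, Units.val_mk0]
      field_simp
      have hkey' : (x:E) * τ (τ a0) = c + (x:E) * τ (τ c) := hkey.trans ha0
      linear_combination -hkey'
    · ext
      push_cast [su_val, map_inv₀, Units.val_mk0]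
      field_simp
      have := congrArg τ hkey
      rw [map_mul] at this
      linear_combination -this
end

section
/- Let N : A → A, N(a) := a·(τ·a)·(τ²·a)·(τ³·a), and let ϑ : A → A, ϑ(a) := a·(τ·a)⁻¹. Then: (1) ker N = {(w, τ³(w)·β) : w ∈ Eˣ, β ∈ E₁ˣ}; (2) the image of ϑ is {(w, τ³(w)·β) : w ∈ Eˣ, β ∈ N_{E/E₁}(Eˣ)}; (3) hence the Tate cohomology group Ĥ⁻¹ := ker N / im ϑ is isomorphic to E₁ˣ/N_{E/E₁}(Eˣ); and (4) if moreover the subgroup N_{E/E₁}(Eˣ) has index 2 in E₁ˣ (as holds for an unramified quadratic extension of p-adic fields), then Ĥ⁻¹ ≅ ℤ/2ℤ. -/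
/-- The norm map `N(a) = a·(τ·a)·(τ²·a)·(τ³·a)` as a homomorphism of `A = Eˣ × Eˣ`. -/
def NA {F E : Type*} [Field F] [Field E] [Algebra F E] (τ : E ≃ₐ[F] E) :
    (Eˣ × Eˣ) →* (Eˣ × Eˣ) :=
  (MonoidHom.id _) * (tPair τ).toMonoidHom * ((tPair τ).trans (tPair τ)).toMonoidHom *
    ((tPair τ).trans ((tPair τ).trans (tPair τ))).toMonoidHom

/-- The map `ϑ(a) = a·(τ·a)⁻¹` as a homomorphism of `A = Eˣ × Eˣ`. -/
def thetaHom {F E : Type*} [Field F] [Field E] [Algebra F E] (τ : E ≃ₐ[F] E) :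
    (Eˣ × Eˣ) →* (Eˣ × Eˣ) :=
  (MonoidHom.id _) * ((tPair τ).trans (MulEquiv.inv _)).toMonoidHom

/-- The norm homomorphism `N_{E/E₁} : x ↦ x·τ²(x)` (valued in `Eˣ`). -/
def nrm21 {F E : Type*} [Field F] [Field E] [Algebra F E] (τ : E ≃ₐ[F] E) : Eˣ →* Eˣ :=
  (MonoidHom.id Eˣ) * ((su τ).trans (su τ)).toMonoidHom

/-- `E₁ˣ`, the units of the fixed field `E₁` of `τ²`, as a subgroup of `Eˣ`. -/
def fixE1 {F E : Type*} [Field F] [Field E] [Algebra F E] (τ : E ≃ₐ[F] E) : Subgroup Eˣ where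
  carrier := {x | su τ (su τ x) = x}
  one_mem' := by simp
  mul_mem' := by
    intro a b ha hb
    simp only [Set.mem_setOf_eq, map_mul] at *
    rw [ha, hb]
  inv_mem' := by
    intro a ha
    simp only [Set.mem_setOf_eq, map_inv] at *
    rw [ha]

section Aux
variable {F E : Type*} [Field F] [Field E] [Algebra F E] (τ : E ≃ₐ[F] E)

lemma ac1 {G : Type*} [CommGroup G] (a b c d : G) : a * b⁻¹ * c⁻¹ * d = 1 ↔ a * d = b * c := by
  rw [show a * b⁻¹ * c⁻¹ * d = (a * d) * (b * c)⁻¹ by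
    simp [mul_inv, mul_comm, mul_assoc, mul_left_comm], mul_inv_eq_one]

lemma ac2 {G : Type*} [CommGroup G] (a b c d : G) : a * b * c⁻¹ * d⁻¹ = 1 ↔ a * b = c * d := by
  rw [show a * b * c⁻¹ * d⁻¹ = (a * b) * (c * d)⁻¹ by
    simp [mul_inv, mul_comm, mul_assoc, mul_left_comm], mul_inv_eq_one]

lemma NA_apply (x y : Eˣ) :
    NA τ (x, y) =
      (x * (su τ y)⁻¹ * (su τ (su τ x))⁻¹ * su τ (su τ (su τ y)),
       y * su τ x * (su τ (su τ y))⁻¹ * (su τ (su τ (su τ x)))⁻¹) := rfl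

lemma theta_apply (x y : Eˣ) :
    thetaHom τ (x, y) = (x * su τ y, y * (su τ x)⁻¹) := rfl

lemma nrm21_apply (z : Eˣ) : nrm21 τ z = z * su τ (su τ z) := rfl

lemma mem_fixE1 (β : Eˣ) : β ∈ fixE1 τ ↔ su τ (su τ β) = β := Iff.rfl

lemma s4 (hτ : orderOf τ = 4) (x : Eˣ) : su τ (su τ (su τ (su τ x))) = x := by
  have h4 : τ ^ 4 = 1 := hτ ▸ pow_orderOf_eq_one τ
  ext
  have : (τ ^ 4) (x : E) = x := by rw [h4]; rfl
  rw [show (4 : ℕ) = 3 + 1 from rfl] at this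
  simpa [pow_succ, AlgEquiv.mul_apply, su] using this

end Aux

/-- for the action `τ·(x,y) = (τ(y)⁻¹, τ(x))` on `A = Eˣ × Eˣ`:
(1) `ker N = {(w, τ³(w)·β) : w ∈ Eˣ, β ∈ E₁ˣ}`;
(2) `im ϑ = {(w, τ³(w)·β) : w ∈ Eˣ, β ∈ N_{E/E₁}(Eˣ)}`;
(3) `Ĥ⁻¹ = ker N / im ϑ ≅ E₁ˣ/N_{E/E₁}(Eˣ)`;
(4) if `N_{E/E₁}(Eˣ)` has index 2 in `E₁ˣ`, then `Ĥ⁻¹ ≅ ℤ/2ℤ`. -/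
theorem statement_5 {F E : Type*} [Field F] [Field E] [Algebra F E] [IsGalois F E]
    (hdeg : Module.finrank F E = 4) (τ : E ≃ₐ[F] E) (hτ : orderOf τ = 4) :
    ((NA τ).ker : Set (Eˣ × Eˣ)) =
      {p : Eˣ × Eˣ | ∃ w β : Eˣ, β ∈ fixE1 τ ∧ p = (w, su τ (su τ (su τ w)) * β)} ∧
    ((thetaHom τ).range : Set (Eˣ × Eˣ)) =
      {p : Eˣ × Eˣ | ∃ w β : Eˣ, β ∈ (nrm21 τ).range ∧
        p = (w, su τ (su τ (su τ w)) * β)} ∧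
    Nonempty (((NA τ).ker ⧸ ((thetaHom τ).range.subgroupOf (NA τ).ker)) ≃*
      (fixE1 τ ⧸ ((nrm21 τ).range.subgroupOf (fixE1 τ)))) ∧
    (((nrm21 τ).range.subgroupOf (fixE1 τ)).index = 2 →
      Nonempty (((NA τ).ker ⧸ ((thetaHom τ).range.subgroupOf (NA τ).ker)) ≃*
        Multiplicative (ZMod 2))) := by
  set s : Eˣ ≃* Eˣ := su τ with hs
  have hs4 : ∀ x : Eˣ, s (s (s (s x))) = x := s4 τ hτ
  -- Part 1
  have h1 : ((NA τ).ker : Set (Eˣ × Eˣ)) =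
      {p : Eˣ × Eˣ | ∃ w β : Eˣ, β ∈ fixE1 τ ∧ p = (w, s (s (s w)) * β)} := by
    ext ⟨x, y⟩
    simp only [SetLike.mem_coe, MonoidHom.mem_ker, Set.mem_setOf_eq, NA_apply, Prod.mk_eq_one,
      ← hs]
    constructor
    · rintro ⟨h1, h2⟩
      rw [ac1] at h1
      rw [ac2] at h2
      refine ⟨x, (s (s (s x)))⁻¹ * y, ?_, ?_⟩
      · rw [mem_fixE1, ← hs, map_mul, map_inv, map_mul, map_inv, hs4 (s x)]
        have := congrArg (fun t => (s x)⁻¹ * (s (s (s x)))⁻¹ * t) h2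
        first
        | simpa [mul_comm, mul_assoc, mul_left_comm] using this
        | simpa [mul_comm, mul_assoc, mul_left_comm] using this.symm
      · simp
    · rintro ⟨w, β, hβ, hp⟩
      rw [Prod.mk.injEq] at hp
      obtain ⟨rfl, rfl⟩ := hp
      rw [mem_fixE1, ← hs] at hβ
      constructor
      · rw [ac1]
        simp [map_mul, map_inv, hs4, hβ, mul_comm, mul_assoc, mul_left_comm]
      · rw [ac2]
        simp [map_mul, map_inv, hs4, hβ, mul_comm, mul_assoc, mul_left_comm]
  -- Part 2
  have h2 : ((thetaHom τ).range : Set (Eˣ × Eˣ)) =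
      {p : Eˣ × Eˣ | ∃ w β : Eˣ, β ∈ (nrm21 τ).range ∧ p = (w, s (s (s w)) * β)} := by
    ext ⟨x, y⟩
    simp only [SetLike.mem_coe, MonoidHom.mem_range, Set.mem_setOf_eq, ← hs]
    constructor
    · rintro ⟨⟨u, v⟩, hp⟩
      rw [theta_apply, Prod.mk.injEq, ← hs] at hp
      obtain ⟨rfl, rfl⟩ := hp
      refine ⟨u * s v, (s u)⁻¹ * (s (s (s u)))⁻¹, ⟨(s u)⁻¹, ?_⟩, ?_⟩
      · rw [nrm21_apply, ← hs, map_inv, map_inv]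
      · rw [Prod.mk.injEq]
        refine ⟨rfl, ?_⟩
        simp [map_mul, hs4, mul_comm, mul_assoc, mul_left_comm]
    · rintro ⟨w, β, ⟨z, hz⟩, hp⟩
      rw [Prod.mk.injEq] at hp
      obtain ⟨rfl, rfl⟩ := hp
      rw [nrm21_apply, ← hs] at hz
      refine ⟨((s (s (s z)))⁻¹, s (s (s x)) * s (s z)), ?_⟩
      rw [theta_apply, Prod.mk.injEq, ← hs]
      constructor
      · simp [map_mul, map_inv, hs4, mul_comm, mul_assoc, mul_left_comm]
      · rw [← hz]
        simp [map_mul, map_inv, hs4, inv_inv, mul_comm, mul_assoc, mul_left_comm]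
  -- the homomorphism f : ker N → fixE1
  have memf : ∀ p : (NA τ).ker, (s (s (s (p : Eˣ × Eˣ).1)))⁻¹ * (p : Eˣ × Eˣ).2 ∈ fixE1 τ := by
    intro p
    have hp : (↑p : Eˣ × Eˣ) ∈ {p : Eˣ × Eˣ | ∃ w β : Eˣ, β ∈ fixE1 τ ∧
        p = (w, s (s (s w)) * β)} := h1 ▸ (SetLike.mem_coe.mpr p.2)
    obtain ⟨w, β, hβ, he⟩ := hp
    rw [he]
    simpa using hβ
  set f : (NA τ).ker →* fixE1 τ := MonoidHom.mk'
    (fun p => ⟨(s (s (s (p : Eˣ × Eˣ).1)))⁻¹ * (p : Eˣ × Eˣ).2, memf p⟩)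
    (by
      intro a b
      ext
      simp only [Subgroup.coe_mul, Prod.fst_mul, Prod.snd_mul, map_mul, MulMemClass.mk_mul_mk]
      simp [mul_inv, mul_comm, mul_assoc, mul_left_comm]) with hf
  have fval : ∀ p : (NA τ).ker,
      (f p : Eˣ) = (s (s (s (p : Eˣ × Eˣ).1)))⁻¹ * (p : Eˣ × Eˣ).2 := fun p => rfl
  have fsurj : Function.Surjective f := by
    rintro ⟨β, hβ⟩
    have hmem : ((1 : Eˣ), β) ∈ (NA τ).ker := by
      have : ((1 : Eˣ), β) ∈ ((NA τ).ker : Set (Eˣ × Eˣ)) := by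
        rw [h1]
        exact ⟨1, β, hβ, by simp⟩
      exact this
    refine ⟨⟨((1 : Eˣ), β), hmem⟩, ?_⟩
    ext
    simp [fval]
  set g := (QuotientGroup.mk' ((nrm21 τ).range.subgroupOf (fixE1 τ))).comp f with hg
  have gsurj : Function.Surjective g := by
    intro q
    obtain ⟨b, rfl⟩ := QuotientGroup.mk'_surjective _ q
    obtain ⟨a, rfl⟩ := fsurj b
    exact ⟨a, rfl⟩
  have gker : g.ker = (thetaHom τ).range.subgroupOf (NA τ).ker := by
    ext p
    rw [MonoidHom.mem_ker, hg, MonoidHom.comp_apply, QuotientGroup.mk'_apply,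
      QuotientGroup.eq_one_iff, Subgroup.mem_subgroupOf, Subgroup.mem_subgroupOf,
      fval p]
    have hset : (↑p : Eˣ × Eˣ) ∈ (thetaHom τ).range ↔
        ∃ w β : Eˣ, β ∈ (nrm21 τ).range ∧ (↑p : Eˣ × Eˣ) = (w, s (s (s w)) * β) := by
      rw [← SetLike.mem_coe, h2]; rfl
    rw [hset]
    constructor
    · intro hmem
      refine ⟨(p : Eˣ × Eˣ).1, _, hmem, ?_⟩
      simp
    · rintro ⟨w, β, hβ, he⟩
      rw [he]
      simpa using hβ
  have e3 : ((NA τ).ker ⧸ ((thetaHom τ).range.subgroupOf (NA τ).ker)) ≃*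
      (fixE1 τ ⧸ ((nrm21 τ).range.subgroupOf (fixE1 τ))) :=
    (QuotientGroup.quotientMulEquivOfEq gker.symm).trans
      (QuotientGroup.quotientKerEquivOfSurjective g gsurj)
  refine ⟨h1, h2, ⟨e3⟩, ?_⟩
  intro hidx
  have hcard : Nat.card ((NA τ).ker ⧸ ((thetaHom τ).range.subgroupOf (NA τ).ker)) = 2 := by
    rw [Nat.card_congr e3.toEquiv, ← Subgroup.index_eq_card, hidx]
  exact ⟨mulEquivOfPrimeCardEq hcard (by simp [Nat.card_eq_fintype_card])⟩
end

section
/- Let η : Eˣ → ℂˣ be a group homomorphism trivial on the norm subgroup N_{E/F}(Eˣ) = {x·τ(x)·τ²(x)·τ³(x) : x ∈ Eˣ} (viewed inside Eˣ). Define η_ρ : Eˣ → ℂˣ by η_ρ(w) := η( w·τ(w)²·τ³(w)⁻¹ ). Then: (1) η_ρ is a group homomorphism trivial on N_{E/E₁}(Eˣ) = {x·τ²(x) : x ∈ Eˣ}, hence descends to a character of Eˣ/N_{E/E₁}(Eˣ); and (2) for all w ∈ Eˣ, η_ρ(w)² = η( z·τ(z)³ ), where z := w·τ²(w)⁻¹.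 In other words, η_ρ is a square root of η∘(2ρ)∘N, where N(w) = w/τ²(w) is the covering norm map and 2ρ(z) = z·τ(z)³ is the sum of the positive roots of PGSp(4) evaluated on the torus T₂(F). -/
/-- The function `η_ρ(w) = η(w·τ(w)²·τ³(w)⁻¹)` on `Eˣ`. -/
def etaRho {F E : Type*} [Field F] [Field E] [Algebra F E] (τ : E ≃ₐ[F] E)
    (η : Eˣ →* ℂˣ) (w : Eˣ) : ℂˣ :=
  η (w * su τ w ^ 2 * (su τ (su τ (su τ w)))⁻¹)

/-- for `E/F` cyclic quartic Galois with generator `τ` and `η : Eˣ → ℂˣ`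
trivial on the norms `x·τ(x)·τ²(x)·τ³(x)`, the function `η_ρ(w) := η(w·τ(w)²·τ³(w)⁻¹)` is a
homomorphism, trivial on `N_{E/E₁}(Eˣ) = {x·τ²(x)}` (hence descends to the quotient), and
satisfies `η_ρ(w)² = η(z·τ(z)³)` with `z = w·τ²(w)⁻¹`; i.e. `η_ρ` is a square root of
`η ∘ (2ρ) ∘ N`. -/
theorem statement_12 {F E : Type*} [Field F] [Field E] [Algebra F E] [IsGalois F E]
    (hdeg : Module.finrank F E = 4) (τ : E ≃ₐ[F] E) (hτ : orderOf τ = 4)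
    (η : Eˣ →* ℂˣ)
    (hηN : ∀ x : Eˣ, η (x * su τ x * su τ (su τ x) * su τ (su τ (su τ x))) = 1) :
    (∀ v w : Eˣ, etaRho τ η (v * w) = etaRho τ η v * etaRho τ η w) ∧
    (∀ x : Eˣ, etaRho τ η (x * su τ (su τ x)) = 1) ∧
    (∀ w : Eˣ,
      etaRho τ η w ^ 2 =
        η ((w * (su τ (su τ w))⁻¹) * su τ (w * (su τ (su τ w))⁻¹) ^ 3)) := by
  set σ := su τ with hσ
  have h4 : ∀ x : Eˣ, σ (σ (σ (σ x))) = x := by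
    intro x
    have hτ4 : τ ^ 4 = 1 := by rw [← hτ]; exact pow_orderOf_eq_one τ
    have := AlgEquiv.ext_iff.mp hτ4 (x : E)
    ext
    simpa [hσ, su, pow_succ, AlgEquiv.mul_apply] using this
  refine ⟨?_, ?_, ?_⟩
  · intro v w
    unfold etaRho
    rw [← map_mul η]
    congr 1
    simp only [map_mul, ← hσ]
    ext
    push_cast
    ring
  · intro x
    unfold etaRho
    rw [← hηN x]
    congr 1
    simp only [map_mul, ← hσ, h4]
    ext
    push_cast
    field_simp
  · intro w
    unfold etaRho
    rw [← map_pow]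
    have key : (w * σ w ^ 2 * (σ (σ (σ w)))⁻¹) ^ 2 =
        (w * (σ (σ w))⁻¹) * σ (w * (σ (σ w))⁻¹) ^ 3 *
          (w * σ w * σ (σ w) * σ (σ (σ w))) := by
      simp only [map_mul, map_inv]
      ext
      push_cast
      field_simp
    rw [← hσ, key, map_mul, hηN w, mul_one]
end

section
/- Suppose Eˣ contains an element u with u² ≠ 1 (e.g., E is infinite). Consider the bijections of Eˣ × Eˣ given by a(w,z) := (w⁻¹, z) and b(w,z) := (z, w), and let t(w,z) := (τ(z)⁻¹, τ(w)). Then the set of elements g of the group ⟨a, b⟩ generated by a and b which commute with t (i.e., g∘t = t∘g) is exactly the cyclic subgroup ⟨a∘b⟩ = {id, ab, (ab)², (ab)³} generated by the rotation ab : (w,z) ↦ (z⁻¹, w). -/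
/-- The bijection `a(w,z) = (w⁻¹, z)` of `Eˣ × Eˣ` (the simple reflection `w_α`). -/
def aPerm (E : Type*) [Field E] : Equiv.Perm (Eˣ × Eˣ) :=
  (Equiv.inv Eˣ).prodCongr (Equiv.refl Eˣ)

/-- The bijection `b(w,z) = (z, w)` of `Eˣ × Eˣ` (the simple reflection `w_β`). -/
def bPerm (E : Type*) [Field E] : Equiv.Perm (Eˣ × Eˣ) :=
  Equiv.prodComm Eˣ Eˣ

/-- The bijection `t(w,z) = (τ(z)⁻¹, τ(w))` of `Eˣ × Eˣ` (the Galois action). -/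
def tPerm {F E : Type*} [Field F] [Field E] [Algebra F E] (τ : E ≃ₐ[F] E) :
    Equiv.Perm (Eˣ × Eˣ) :=
  ((MulEquiv.prodComm : (Eˣ × Eˣ) ≃* (Eˣ × Eˣ)).trans
    (MulEquiv.prodCongr ((su τ).trans (MulEquiv.inv Eˣ)) (su τ))).toEquiv

/-- if `Eˣ` contains an element `u` with `u² ≠ 1`, then the set of elements of
the group `⟨a, b⟩` generated by `a(w,z) = (w⁻¹,z)` and `b(w,z) = (z,w)` commuting with
`t(w,z) = (τ(z)⁻¹, τ(w))` is exactly the cyclic subgroup generated by the rotation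
`a∘b : (w,z) ↦ (z⁻¹, w)`, namely `{id, ab, (ab)², (ab)³}`. -/
theorem statement_13 {F E : Type*} [Field F] [Field E] [Algebra F E] [IsGalois F E]
    (hdeg : Module.finrank F E = 4) (τ : E ≃ₐ[F] E) (hτ : orderOf τ = 4)
    (hu : ∃ u : Eˣ, u ^ 2 ≠ 1) :
    {g : Equiv.Perm (Eˣ × Eˣ) |
        g ∈ Subgroup.closure {aPerm E, bPerm E} ∧ g * tPerm τ = tPerm τ * g} =
      (Subgroup.zpowers (aPerm E * bPerm E) : Set (Equiv.Perm (Eˣ × Eˣ))) ∧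
    (Subgroup.zpowers (aPerm E * bPerm E) : Set (Equiv.Perm (Eˣ × Eˣ))) =
      {1, aPerm E * bPerm E, (aPerm E * bPerm E) ^ 2, (aPerm E * bPerm E) ^ 3} := by
  obtain ⟨u, hu⟩ := hu
  set a := aPerm E with haDef
  set b := bPerm E with hbDef
  set t := tPerm τ with htDef
  set r := a * b with hrDef
  have mul_apply : ∀ (g h : Equiv.Perm (Eˣ × Eˣ)) p, (g * h) p = g (h p) := fun _ _ _ => rfl
  have one_apply : ∀ p : Eˣ × Eˣ, (1 : Equiv.Perm (Eˣ × Eˣ)) p = p := fun _ => rfl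
  have ha_app : ∀ p : Eˣ × Eˣ, a p = (p.1⁻¹, p.2) := fun _ => rfl
  have hb_app : ∀ p : Eˣ × Eˣ, b p = (p.2, p.1) := fun _ => rfl
  have ht_app : ∀ p : Eˣ × Eˣ, t p = ((su τ p.2)⁻¹, su τ p.1) := fun _ => rfl
  have hr_app : ∀ p : Eˣ × Eˣ, r p = (p.2⁻¹, p.1) := fun _ => rfl
  have ha2 : a * a = 1 := by
    ext p : 1 <;> simp [mul_apply, ha_app, hb_app, one_apply]
  have ha_inv : a⁻¹ = a := inv_eq_of_mul_eq_one_right ha2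
  have hr4 : r ^ 4 = 1 := by
    have h4 : r ^ 4 = r * r * r * r := by
      rw [pow_succ, pow_succ, pow_two]
    rw [h4]
    ext p : 1 <;> simp [mul_apply, ha_app, hb_app, hr_app, one_apply]
  have harar : a * r * a * r = 1 := by
    ext p : 1 <;> simp [mul_apply, ha_app, hb_app, hr_app, one_apply]
  have hara : a * r * a = r⁻¹ := eq_inv_of_mul_eq_one_left harar
  have hbar : b * a * r = 1 := by
    ext p : 1 <;> simp [mul_apply, ha_app, hb_app, hr_app, one_apply]
  have hba : b * a = r⁻¹ := eq_inv_of_mul_eq_one_left hbar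
  have hconj : ∀ k : ℤ, a * r ^ k * a = r ^ (-k) := by
    intro k
    calc a * r ^ k * a = a * r ^ k * a⁻¹ := by rw [ha_inv]
      _ = (MulAut.conj a) (r ^ k) := by rw [MulAut.conj_apply]
      _ = ((MulAut.conj a) r) ^ k := map_zpow _ _ _
      _ = (a * r * a⁻¹) ^ k := by rw [MulAut.conj_apply]
      _ = (a * r * a) ^ k := by rw [ha_inv]
      _ = (r⁻¹) ^ k := by rw [hara]
      _ = r ^ (-k) := by rw [inv_zpow, ← zpow_neg]
  have hz4 : r ^ (4 : ℤ) = 1 := by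
    rw [show (4 : ℤ) = ((4 : ℕ) : ℤ) by norm_num, zpow_natCast, hr4]
  have hzmod : ∀ k : ℤ, r ^ k = r ^ (k % 4) := by
    intro k
    conv_lhs => rw [show k = 4 * (k / 4) + k % 4 from (Int.mul_ediv_add_emod k 4).symm]
    rw [zpow_add, zpow_mul, hz4, one_zpow, one_mul]
  have hrt : r * t = t * r := by
    ext p : 1 <;> simp [mul_apply, ha_app, hb_app, hr_app, ht_app, map_inv]
  have hxne : (su τ u)⁻¹ ≠ su τ u := by
    intro h
    apply hu
    have h2 : su τ (u ^ 2) = su τ 1 := by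
      rw [map_pow, map_one, sq]
      nth_rewrite 1 [← h]
      exact inv_mul_cancel _
    exact (su τ).injective h2
  have haMem : a ∈ Subgroup.closure {a, b} := Subgroup.subset_closure (Set.mem_insert _ _)
  have hbMem : b ∈ Subgroup.closure {a, b} :=
    Subgroup.subset_closure (Set.mem_insert_of_mem _ rfl)
  have hrMem : r ∈ Subgroup.closure {a, b} := mul_mem haMem hbMem
  constructor
  · ext g
    simp only [Set.mem_setOf_eq, SetLike.mem_coe]
    constructor
    · rintro ⟨hg, hcomm⟩
      have hP : g ∈ Subgroup.zpowers r ∨ g * a ∈ Subgroup.zpowers r := by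
        refine Subgroup.closure_induction (p := fun x _ =>
            x ∈ Subgroup.zpowers r ∨ x * a ∈ Subgroup.zpowers r) ?_ ?_ ?_ ?_ hg
        · rintro x (rfl | rfl)
          · right; rw [ha2]; exact one_mem _
          · right; rw [hba]; exact inv_mem (Subgroup.mem_zpowers r)
        · left; exact one_mem _
        · rintro x y _ _ (⟨j, hj⟩ | ⟨j, hj⟩) (⟨k, hk⟩ | ⟨k, hk⟩)
          · replace hj : r ^ j = x := hj
            replace hk : r ^ k = y := hk
            left; exact ⟨j + k, by show r ^ (j + k) = x * y; rw [zpow_add, hj, hk]⟩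
          · replace hj : r ^ j = x := hj
            replace hk : r ^ k = y * a := hk
            right
            exact ⟨j + k, by show r ^ (j + k) = x * y * a; rw [zpow_add, hj, hk, mul_assoc]⟩
          · replace hj : r ^ j = x * a := hj
            replace hk : r ^ k = y := hk
            have hx' : x = r ^ j * a := by rw [hj, mul_assoc, ha2, mul_one]
            right
            refine ⟨j - k, ?_⟩
            show r ^ (j - k) = x * y * a
            rw [hx', ← hk, sub_eq_add_neg, zpow_add, ← hconj k]
            group
          · replace hj : r ^ j = x * a := hj
            replace hk : r ^ k = y * a := hk
            have hx' : x = r ^ j * a := by rw [hj, mul_assoc, ha2, mul_one]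
            have hy' : y = r ^ k * a := by rw [hk, mul_assoc, ha2, mul_one]
            left
            refine ⟨j - k, ?_⟩
            show r ^ (j - k) = x * y
            rw [hx', hy', sub_eq_add_neg, zpow_add, ← hconj k]
            group
        · rintro x _ (⟨j, hj⟩ | ⟨j, hj⟩)
          · replace hj : r ^ j = x := hj
            left; exact ⟨-j, by show r ^ (-j) = x⁻¹; rw [zpow_neg, hj]⟩
          · replace hj : r ^ j = x * a := hj
            have hx' : x = r ^ j * a := by rw [hj, mul_assoc, ha2, mul_one]
            right
            refine ⟨j, ?_⟩
            show r ^ j = x⁻¹ * a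
            rw [hx', mul_inv_rev, ha_inv, ← zpow_neg, hconj, neg_neg]
      rcases hP with h | ⟨k, hk⟩
      · exact h
      · exfalso
        replace hk : r ^ k = g * a := hk
        have hg' : g = r ^ (k % 4) * a := by
          rw [← hzmod k, hk, mul_assoc, ha2, mul_one]
        have hm0 : 0 ≤ k % 4 := Int.emod_nonneg k (by norm_num)
        have hm4 : k % 4 < 4 := Int.emod_lt_of_pos k (by norm_num)
        set m := k % 4 with hmDef
        clear_value m
        interval_cases m
        · rw [zpow_zero, one_mul] at hg'
          subst hg'
          have h := congrArg (fun f : Equiv.Perm (Eˣ × Eˣ) => f (u, u)) hcomm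
          simp only [mul_apply, ha_app, ht_app, map_inv, inv_inv, Prod.mk.injEq] at h
          exact hxne h.1.symm
        · rw [zpow_one] at hg'
          subst hg'
          have h := congrArg (fun f : Equiv.Perm (Eˣ × Eˣ) => f (u, u)) hcomm
          simp only [mul_apply, ha_app, hr_app, ht_app, map_inv, inv_inv, Prod.mk.injEq] at h
          exact hxne h.1
        · rw [zpow_two] at hg'
          subst hg'
          have h := congrArg (fun f : Equiv.Perm (Eˣ × Eˣ) => f (u, u)) hcomm
          simp only [mul_apply, ha_app, hr_app, ht_app, map_inv, inv_inv, Prod.mk.injEq] at h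
          exact hxne h.1
        · rw [show (3 : ℤ) = 1 + 2 by norm_num, zpow_add, zpow_one, zpow_two] at hg'
          subst hg'
          have h := congrArg (fun f : Equiv.Perm (Eˣ × Eˣ) => f (u, u)) hcomm
          simp only [mul_apply, ha_app, hr_app, ht_app, map_inv, inv_inv, Prod.mk.injEq] at h
          exact hxne h.1.symm
    · rintro ⟨k, hk⟩
      replace hk : r ^ k = g := hk
      subst hk
      refine ⟨Subgroup.zpow_mem _ hrMem k, ?_⟩
      have hc : Commute r t := hrt
      exact (hc.zpow_left k).eq
  · ext g
    simp only [SetLike.mem_coe, Set.mem_insert_iff, Set.mem_singleton_iff]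
    constructor
    · rintro ⟨k, hk⟩
      replace hk : r ^ k = g := hk
      subst hk
      rw [hzmod k]
      have hm0 : 0 ≤ k % 4 := Int.emod_nonneg k (by norm_num)
      have hm4 : k % 4 < 4 := Int.emod_lt_of_pos k (by norm_num)
      set m := k % 4 with hmDef
      clear_value m
      interval_cases m
      · left; exact zpow_zero r
      · right; left; exact zpow_one r
      · right; right; left
        rw [zpow_two, sq]
      · right; right; right
        rw [show (3 : ℤ) = ((3 : ℕ) : ℤ) by norm_num, zpow_natCast]
    · rintro (rfl | rfl | rfl | rfl)
      · exact one_mem _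
      · exact Subgroup.mem_zpowers r
      · exact pow_mem (Subgroup.mem_zpowers r) 2
      · exact pow_mem (Subgroup.mem_zpowers r) 3
end
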